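/- The second-order ODE u'' = u'/((1+x)x) - (x² + x³)/(4(1+x)u³) - x/(2(1+x)u) is solved, on suitable intervals, by u(x) = (C - 2x + 2 ln(1+x)) · (∫ -x/(C - 2x + 2 ln(1+x))² dx)^{1/2} for every C ∈ ℝ, where the antiderivative is chosen so that the expression under the square root is positive. -/

import Mathlib

/-! With `g = √F` the factors of `u = v g` satisfy `v' = -2x/(1+x)` and `g' = -x/(2v²g)`, so
`u' = -2xg/(1+x) - x/(2u)`. Differentiating once more, with `u'` substituted for the derivative of
`u` in the last term, gives `u''` as a rational expression in `x`, `v`, `g`, and the ODE becomes a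
polynomial identity after clearing denominators. -/

/-- `v(x) = C - 2x + 2 ln(1+x)`. -/
noncomputable def vEx3 (C : ℝ) : ℝ → ℝ := fun x => C - 2 * x + 2 * Real.log (1 + x)

/-- `u = v · √F` where `F` is an antiderivative of `-x/v(x)²`. -/
noncomputable def uEx3 (C : ℝ) (F : ℝ → ℝ) : ℝ → ℝ := fun x =>
  vEx3 C x * Real.sqrt (F x)

open Filter Topology

theorem hasDerivAt_vEx3 (C : ℝ) {x : ℝ} (hx : 1 + x ≠ 0) :
    HasDerivAt (vEx3 C) (-2 * x / (1 + x)) x := by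
  have hlog : HasDerivAt (fun t => Real.log (1 + t)) (1 / (1 + x)) x := by
    simpa using ((hasDerivAt_id x).const_add 1).log hx
  refine (((hasDerivAt_id' x).const_mul 2).const_sub C |>.add (hlog.const_mul 2)).congr_deriv ?_
  field_simp
  ring

section

variable {v g : ℝ → ℝ} {x : ℝ}

theorem hasDerivAt_mul_of_factor_derivs (hv : HasDerivAt v (-2 * x / (1 + x)) x)
    (hg : HasDerivAt g (-x / (2 * v x ^ 2 * g x)) x) (hv0 : v x ≠ 0) :
    HasDerivAt (fun t => v t * g t) (-2 * x * g x / (1 + x) - x / (2 * (v x * g x))) x := by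
  refine (hv.mul hg).congr_deriv ?_
  field_simp
  ring

theorem deriv_deriv_mul_eq_of_factor_derivs {s : Set ℝ} (hs : IsOpen s)
    (hv : ∀ y ∈ s, HasDerivAt v (-2 * y / (1 + y)) y)
    (hg : ∀ y ∈ s, HasDerivAt g (-y / (2 * v y ^ 2 * g y)) y)
    (h1 : ∀ y ∈ s, 1 + y ≠ 0) (hv0 : ∀ y ∈ s, v y ≠ 0) (hg0 : ∀ y ∈ s, g y ≠ 0)
    (hxs : x ∈ s) (hx0 : x ≠ 0) :
    deriv (deriv fun t => v t * g t) x =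
      deriv (fun t => v t * g t) x / ((1 + x) * x) -
        (x ^ 2 + x ^ 3) / (4 * (1 + x) * (v x * g x) ^ 3) -
        x / (2 * (1 + x) * (v x * g x)) := by
  have hu : ∀ y ∈ s, HasDerivAt (fun t => v t * g t)
      (-2 * y * g y / (1 + y) - y / (2 * (v y * g y))) y := fun y hy =>
    hasDerivAt_mul_of_factor_derivs (hv y hy) (hg y hy) (hv0 y hy)
  have hderiv : deriv (fun t => v t * g t) =ᶠ[𝓝 x]
      fun y => -2 * y * g y / (1 + y) - y / (2 * (v y * g y)) := by
    filter_upwards [hs.mem_nhds hxs] with y hy using (hu y hy).deriv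
  have h1x := h1 x hxs
  have hvx := hv0 x hxs
  have hgx := hg0 x hxs
  have hu' : HasDerivAt (fun y => -2 * y * g y / (1 + y) - y / (2 * (v y * g y))) _ x :=
    ((((hasDerivAt_id' x).const_mul (-2)).mul (hg x hxs)).div
      ((hasDerivAt_id' x).const_add 1) h1x).sub
      ((hasDerivAt_id' x).div ((hu x hxs).const_mul 2) (by positivity))
  rw [hderiv.deriv_eq, hu'.deriv, (hu x hxs).deriv]
  simp only [Pi.mul_apply]
  field_simp
  ring

end

/-- For every `C ∈ ℝ`, the function
`u(x) = (C - 2x + 2 ln(1+x)) · (∫ -x/(C - 2x + 2 ln(1+x))² dx)^{1/2}` satisfies the ODE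
`u'' = u'/((1+x)x) - (x² + x³)/(4(1+x)u³) - x/(2(1+x)u)` on any open set where
`1 + x > 0`, `x ≠ 0`, `v = C - 2x + 2 ln(1+x) ≠ 0`, the antiderivative `F` of `-x/v²`
is positive. -/
theorem stmt_11 (C : ℝ) (F : ℝ → ℝ) (s : Set ℝ) (hs : IsOpen s)
    (hF : ∀ x ∈ s, HasDerivAt F (-x / (vEx3 C x) ^ 2) x)
    (hx : ∀ x ∈ s, 1 + x > 0 ∧ x ≠ 0)
    (hv : ∀ x ∈ s, vEx3 C x ≠ 0)
    (hFpos : ∀ x ∈ s, F x > 0) :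
    ∀ x ∈ s, deriv (deriv (uEx3 C F)) x =
      deriv (uEx3 C F) x / ((1 + x) * x) -
        (x ^ 2 + x ^ 3) / (4 * (1 + x) * (uEx3 C F x) ^ 3) -
        x / (2 * (1 + x) * uEx3 C F x) := by
  intro x hxs
  have h1 : ∀ y ∈ s, 1 + y ≠ 0 := fun y hy => (hx y hy).1.ne'
  have hsqrt : ∀ y ∈ s, HasDerivAt (fun t => √(F t)) (-y / (2 * vEx3 C y ^ 2 * √(F y))) y :=
    fun y hy => ((hF y hy).sqrt (hFpos y hy).ne').congr_deriv (by rw [div_div]; ring)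
  exact deriv_deriv_mul_eq_of_factor_derivs hs (fun y hy => hasDerivAt_vEx3 C (h1 y hy)) hsqrt
    h1 hv (fun y hy => (Real.sqrt_pos.2 (hFpos y hy)).ne') hxs (hx x hxs).2
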